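/- arXiv:2507.08528 — 4 statements merged into one kernel-verified Lean document; each statement's English description precedes it below -/
import Mathlib

section
/- Let n ≥ 2, let c be a nonzero complex number, r a complex number, and b : Fin n → ℂ an injective function. Suppose ν is a permutation of Fin n such that b(ν(i)) = c * b(i) + r for all i. If ν contains a cycle of length m ≥ 2 (i.e., there is an index i with ν^[m](i) = i and ν^[k](i) ≠ i for 0 < k < m), then c is a primitive m-th root of unity. -/
/-- Iterating the affine relation `b (ν i) = c * b i + r` along a cycle of length `m ≥ 2`
forces `c` to be a primitive `m`-th root of unity. -/
theorem stmt_0 (n : ℕ) (hn : 2 ≤ n) (c r : ℂ) (hc : c ≠ 0)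
    (b : Fin n → ℂ) (hb : Function.Injective b)
    (ν : Equiv.Perm (Fin n)) (hrel : ∀ i, b (ν i) = c * b i + r)
    (m : ℕ) (hm : 2 ≤ m) (i : Fin n)
    (hcyc : (⇑ν)^[m] i = i)
    (hmin : ∀ k, 0 < k → k < m → (⇑ν)^[k] i ≠ i) :
    IsPrimitiveRoot c m := by
  -- iteration formula
  have key : ∀ (k : ℕ) (p : Fin n),
      b ((⇑ν)^[k] p) = c ^ k * b p + (∑ j ∈ Finset.range k, c ^ j) * r := by
    intro k
    induction k with
    | zero => intro p; simp
    | succ k ih =>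
      intro p
      rw [Function.iterate_succ_apply', hrel, ih, geom_sum_succ]
      ring
  have hne : ν i ≠ i := by
    have := hmin 1 one_pos (by omega)
    simpa using this
  have h1 : b i = c ^ m * b i + (∑ j ∈ Finset.range m, c ^ j) * r := by
    conv_lhs => rw [← hcyc]
    exact key m i
  have h2 : b (ν i) = c ^ m * b (ν i) + (∑ j ∈ Finset.range m, c ^ j) * r := by
    have h3 : (⇑ν)^[m] (ν i) = ν i := by
      rw [← Function.iterate_succ_apply, Function.iterate_succ_apply', hcyc]
    conv_lhs => rw [← h3]
    exact key m (ν i)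
  have hcm : c ^ m = 1 := by
    have : (1 - c ^ m) * (b i - b (ν i)) = 0 := by
      have := congrArg₂ (· - ·) h1 h2
      linear_combination this
    rcases mul_eq_zero.mp this with h | h
    · exact (sub_eq_zero.mp h).symm
    · exact absurd (hb (sub_eq_zero.mp h)).symm hne
  have hSr : (∑ j ∈ Finset.range m, c ^ j) * r = 0 := by
    have h := h1
    rw [hcm, one_mul] at h
    linear_combination -h
  -- if c^k = 1 then S_k * r = 0
  have hSk : ∀ k : ℕ, c ^ k = 1 → (∑ j ∈ Finset.range k, c ^ j) * r = 0 := by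
    intro k hk
    by_cases hc1 : c = 1
    · have hr : r = 0 := by
        have hSm : (∑ j ∈ Finset.range m, c ^ j) = (m : ℂ) := by
          simp [hc1]
        rw [hSm] at hSr
        rcases mul_eq_zero.mp hSr with h | h
        · exact absurd (Nat.cast_eq_zero.mp h) (by omega)
        · exact h
      simp [hr]
    · have : (c - 1) * (∑ j ∈ Finset.range k, c ^ j) = c ^ k - 1 := by
        rw [mul_comm]; exact geom_sum_mul c k
      rw [hk, sub_self] at this
      rcases mul_eq_zero.mp this with h | h
      · exact absurd (sub_eq_zero.mp h) hc1
      · rw [h, zero_mul]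
  constructor
  · exact hcm
  · intro l hl
    by_contra hnd
    have hk : c ^ (l % m) = 1 := by
      have h0 : c ^ (m * (l / m)) * c ^ (l % m) = 1 := by
        rw [← pow_add, Nat.div_add_mod]; exact hl
      rwa [pow_mul, hcm, one_pow, one_mul] at h0
    have hkpos : 0 < l % m := by
      rcases Nat.eq_zero_or_pos (l % m) with h | h
      · exact absurd (Nat.dvd_of_mod_eq_zero h) hnd
      · exact h
    have hklt : l % m < m := Nat.mod_lt _ (by omega)
    apply hmin (l % m) hkpos hklt
    apply hb
    rw [key (l % m) i, hk, one_mul, hSk _ hk, add_zero]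
end

section
/- Let ν be a permutation of Fin 5 whose cycle type consists of one 3-cycle and one 2-cycle (e.g. ν = (012)(34)). Then there is no injective b : Fin 5 → ℂ and nonzero c ∈ ℂ satisfying b(ν(i)) − b(ν(j)) = c·(b(i) − b(j)) for all i, j. -/
open Equiv Finset

lemma aux_cycle_pt {α : Type*} [Fintype α] [DecidableEq α] (ν : Equiv.Perm α) {n : ℕ}
    (hn : n ∈ ν.cycleType) : ∃ x, ν x ≠ x ∧ (ν ^ n) x = x := by
  simp only [Equiv.Perm.cycleType_def, Multiset.mem_map, Function.comp_apply,
    ← Finset.mem_def] at hn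
  obtain ⟨σ, hσ, rfl⟩ := hn
  obtain ⟨hcyc, hagree⟩ := Equiv.Perm.mem_cycleFactorsFinset_iff.mp hσ
  obtain ⟨x, hx⟩ := hcyc.nonempty_support
  refine ⟨x, ?_, ?_⟩
  · rw [← hagree x hx]; exact Equiv.Perm.mem_support.mp hx
  · have hσn : σ ^ σ.support.card = 1 := by
      rw [← hcyc.orderOf]; exact pow_orderOf_eq_one σ
    have key : ∀ k : ℕ, (ν ^ k) x = (σ ^ k) x := by
      intro k
      induction k with
      | zero => rfl
      | succ k ih =>
        rw [pow_succ', pow_succ', Equiv.Perm.mul_apply, Equiv.Perm.mul_apply, ih,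
          hagree _ (Equiv.Perm.pow_apply_mem_support.mpr hx)]
    rw [key, hσn, Equiv.Perm.one_apply]

/-- No permutation of `Fin 5` of cycle type `(3,2)` is compatible with an injective `b`
via `b (ν i) - b (ν j) = c * (b i - b j)` for nonzero `c`. -/
theorem stmt_4 (ν : Equiv.Perm (Fin 5)) (hcyc : ν.cycleType = {2, 3}) :
    ¬ ∃ (b : Fin 5 → ℂ) (c : ℂ), Function.Injective b ∧ c ≠ 0 ∧
      ∀ i j, b (ν i) - b (ν j) = c * (b i - b j) := by
  rintro ⟨b, c, hb, hc, hrel⟩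
  set S : ℂ := ∑ j, b j with hS
  set f : Fin 5 → ℂ := fun i => b i - S / 5 with hf
  have hsum : ∀ i : Fin 5, (5 : ℂ) * b (ν i) - S = c * ((5 : ℂ) * b i - S) := by
    intro i
    have h1 : ∑ j, (b (ν i) - b (ν j)) = ∑ j, c * (b i - b j) := by
      exact Finset.sum_congr rfl fun j _ => hrel i j
    have h2 : ∑ j : Fin 5, b (ν j) = S := Equiv.sum_comp ν b
    simp only [Finset.sum_sub_distrib, Finset.sum_const, ← Finset.mul_sum] at h1
    rw [h2] at h1
    simp only [Finset.card_univ, Fintype.card_fin, nsmul_eq_mul, Finset.sum_sub_distrib,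
      Finset.sum_const, Finset.card_univ, Fintype.card_fin] at h1
    push_cast at h1 ⊢
    linear_combination h1
  have hfrel : ∀ i, f (ν i) = c * f i := by
    intro i
    have := hsum i
    have h5 : (5 : ℂ) ≠ 0 := by norm_num
    field_simp [hf]
    linear_combination (1/5 : ℂ) * this
  have hfinj : Function.Injective f := fun i j h => hb (sub_left_inj.mp h)
  have hfpow : ∀ (k : ℕ) (i : Fin 5), f ((ν ^ k) i) = c ^ k * f i := by
    intro k
    induction k with
    | zero => intro i; simp
    | succ k ih =>
      intro i
      rw [pow_succ', Equiv.Perm.mul_apply, hfrel, ih]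
      ring
  have hne0 : ∀ i, ν i ≠ i → f i ≠ 0 := by
    intro i hi h0
    exact hi (hfinj (by rw [hfrel, h0, mul_zero]))
  have h2 : (2 : ℕ) ∈ ν.cycleType := by rw [hcyc]; simp
  have h3 : (3 : ℕ) ∈ ν.cycleType := by rw [hcyc]; simp
  obtain ⟨x, hx, hx2⟩ := aux_cycle_pt ν h2
  obtain ⟨y, hy, hy3⟩ := aux_cycle_pt ν h3
  have hc2 : c ^ 2 = 1 := by
    have := hfpow 2 x
    rw [hx2] at this
    exact mul_right_cancel₀ (hne0 x hx) (by rw [← this, one_mul])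
  have hc3 : c ^ 3 = 1 := by
    have := hfpow 3 y
    rw [hy3] at this
    exact mul_right_cancel₀ (hne0 y hy) (by rw [← this, one_mul])
  have hc1 : c = 1 := by
    have : c * c ^ 2 = c ^ 3 := by ring
    rw [hc2, hc3, mul_one] at this
    exact this
  exact hx (hfinj (by rw [hfrel, hc1, one_mul]))
end

section
/- The real number 1/22 + (3/22)·(∫₀¹∫₀¹ (8 − v² − 4u) dv du + ∫₀¹∫₁^{4−2u} (9 − 4u − 2v) dv du + ∫₀¹∫_{4−2u}^{5−2u} (5 − 2u − v)² dv du + ∫₁²∫₀^{2−u} (4u² − v² − 16u + 16) dv du + ∫₁²∫_{2−u}^{4−2u} (2−u)(10 − 5u − 2v) dv du + ∫₁²∫_{4−2u}^{6−3u} (6 − 3u − v)² dv du) equals 85/44. -/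
lemma cubic_integral (a b c0 c1 c2 c3 : ℝ) :
    ∫ x in a..b, (c0 + c1 * x + c2 * x ^ 2 + c3 * x ^ 3) =
      c0 * (b - a) + c1 * (b ^ 2 - a ^ 2) / 2 + c2 * (b ^ 3 - a ^ 3) / 3
        + c3 * (b ^ 4 - a ^ 4) / 4 := by
  rw [intervalIntegral.integral_add ((by continuity : Continuous _).intervalIntegrable _ _)
        ((by continuity : Continuous _).intervalIntegrable _ _),
      intervalIntegral.integral_add ((by continuity : Continuous _).intervalIntegrable _ _)
        ((by continuity : Continuous _).intervalIntegrable _ _),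
      intervalIntegral.integral_add ((by continuity : Continuous _).intervalIntegrable _ _)
        ((by continuity : Continuous _).intervalIntegrable _ _),
      intervalIntegral.integral_const_mul, intervalIntegral.integral_const_mul,
      intervalIntegral.integral_const_mul,
      integral_id, integral_pow, integral_pow, intervalIntegral.integral_const]
  push_cast [smul_eq_mul]
  ring

/-- The computation `S(W^S_{•,•}; G) = 85/44` for the exceptional curve `G`. -/
theorem stmt_10 :
    (1 / 22 : ℝ) + (3 / 22 : ℝ) *
      ((∫ u in (0:ℝ)..1, ∫ v in (0:ℝ)..1, (8 - v ^ 2 - 4 * u)) +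
       (∫ u in (0:ℝ)..1, ∫ v in (1:ℝ)..(4 - 2 * u), (9 - 4 * u - 2 * v)) +
       (∫ u in (0:ℝ)..1, ∫ v in (4 - 2 * u)..(5 - 2 * u), (5 - 2 * u - v) ^ 2) +
       (∫ u in (1:ℝ)..2, ∫ v in (0:ℝ)..(2 - u), (4 * u ^ 2 - v ^ 2 - 16 * u + 16)) +
       (∫ u in (1:ℝ)..2, ∫ v in (2 - u)..(4 - 2 * u), (2 - u) * (10 - 5 * u - 2 * v)) +
       (∫ u in (1:ℝ)..2, ∫ v in (4 - 2 * u)..(6 - 3 * u), (6 - 3 * u - v) ^ 2)) =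
      85 / 44 := by
  have e1 : ∀ u : ℝ, (∫ v in (0:ℝ)..1, (8 - v ^ 2 - 4 * u)) = 23 / 3 - 4 * u := by
    intro u
    rw [show (fun v : ℝ => 8 - v ^ 2 - 4 * u) =
        fun v : ℝ => (8 - 4 * u) + 0 * v + (-1) * v ^ 2 + 0 * v ^ 3 from by funext v; ring,
      cubic_integral]; ring
  have e2 : ∀ u : ℝ, (∫ v in (1:ℝ)..(4 - 2 * u), (9 - 4 * u - 2 * v)) =
      (3 - 2 * u) * (9 - 4 * u) - ((4 - 2 * u) ^ 2 - 1) := by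
    intro u
    rw [show (fun v : ℝ => 9 - 4 * u - 2 * v) =
        fun v : ℝ => (9 - 4 * u) + (-2) * v + 0 * v ^ 2 + 0 * v ^ 3 from by funext v; ring,
      cubic_integral]; ring
  have e3 : ∀ u : ℝ, (∫ v in (4 - 2 * u)..(5 - 2 * u), (5 - 2 * u - v) ^ 2) = 1 / 3 := by
    intro u
    rw [show (fun v : ℝ => (5 - 2 * u - v) ^ 2) =
        fun v : ℝ => (5 - 2 * u) ^ 2 + (-2 * (5 - 2 * u)) * v + 1 * v ^ 2 + 0 * v ^ 3 from by
          funext v; ring,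
      cubic_integral]; ring
  have e4 : ∀ u : ℝ, (∫ v in (0:ℝ)..(2 - u), (4 * u ^ 2 - v ^ 2 - 16 * u + 16)) =
      (2 - u) * (4 * u ^ 2 - 16 * u + 16) - (2 - u) ^ 3 / 3 := by
    intro u
    rw [show (fun v : ℝ => 4 * u ^ 2 - v ^ 2 - 16 * u + 16) =
        fun v : ℝ => (4 * u ^ 2 - 16 * u + 16) + 0 * v + (-1) * v ^ 2 + 0 * v ^ 3 from by
          funext v; ring,
      cubic_integral]; ring
  have e5 : ∀ u : ℝ, (∫ v in (2 - u)..(4 - 2 * u), (2 - u) * (10 - 5 * u - 2 * v)) =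
      (2 - u) * ((10 - 5 * u) * (2 - u) - ((4 - 2 * u) ^ 2 - (2 - u) ^ 2)) := by
    intro u
    rw [show (fun v : ℝ => (2 - u) * (10 - 5 * u - 2 * v)) =
        fun v : ℝ => ((2 - u) * (10 - 5 * u)) + (-2 * (2 - u)) * v + 0 * v ^ 2 + 0 * v ^ 3 from by
          funext v; ring,
      cubic_integral]; ring
  have e6 : ∀ u : ℝ, (∫ v in (4 - 2 * u)..(6 - 3 * u), (6 - 3 * u - v) ^ 2) =
      (2 - u) ^ 3 / 3 := by
    intro u
    rw [show (fun v : ℝ => (6 - 3 * u - v) ^ 2) =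
        fun v : ℝ => (6 - 3 * u) ^ 2 + (-2 * (6 - 3 * u)) * v + 1 * v ^ 2 + 0 * v ^ 3 from by
          funext v; ring,
      cubic_integral]; ring
  simp only [e1, e2, e3, e4, e5, e6]
  rw [show (fun u : ℝ => 23 / 3 - 4 * u) =
      fun u : ℝ => (23 / 3) + (-4) * u + 0 * u ^ 2 + 0 * u ^ 3 from by funext u; ring,
    show (fun u : ℝ => (3 - 2 * u) * (9 - 4 * u) - ((4 - 2 * u) ^ 2 - 1)) =
      fun u : ℝ => 12 + (-14) * u + 4 * u ^ 2 + 0 * u ^ 3 from by funext u; ring,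
    show (fun _ : ℝ => (1 : ℝ) / 3) =
      fun u : ℝ => (1 / 3) + 0 * u + 0 * u ^ 2 + 0 * u ^ 3 from by funext u; ring,
    show (fun u : ℝ => (2 - u) * (4 * u ^ 2 - 16 * u + 16) - (2 - u) ^ 3 / 3) =
      fun u : ℝ => (88 / 3) + (-44) * u + 22 * u ^ 2 + (-11 / 3) * u ^ 3 from by funext u; ring,
    show (fun u : ℝ => (2 - u) * ((10 - 5 * u) * (2 - u) - ((4 - 2 * u) ^ 2 - (2 - u) ^ 2))) =
      fun u : ℝ => 16 + (-24) * u + 12 * u ^ 2 + (-2) * u ^ 3 from by funext u; ring,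
    show (fun u : ℝ => (2 - u) ^ 3 / 3) =
      fun u : ℝ => (8 / 3) + (-4) * u + 2 * u ^ 2 + (-1 / 3) * u ^ 3 from by funext u; ring,
    cubic_integral, cubic_integral, cubic_integral, cubic_integral, cubic_integral,
    cubic_integral]
  norm_num
end

section
/- Let M be a negative definite symmetric real r×r matrix and d ∈ ℝ^r. Then the linear system M·b = d has a unique solution b; moreover, if d has all entries strictly negative (dᵢ < 0 for all i) and all off-diagonal entries of M are non-negative (Mᵢⱼ ≥ 0 for i ≠ j), then every entry of the solution b is non-negative. -/
open Matrix


/-- Linear-algebra core of Zariski's algorithm: a negative definite symmetric real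
matrix `M` gives a uniquely solvable system `M·b = d`; and if all `dᵢ < 0` and all
off-diagonal entries of `M` are nonnegative, then every solution has nonnegative
entries. -/
theorem stmt_16 (r : ℕ) (M : Matrix (Fin r) (Fin r) ℝ)
    (hsymm : M.IsSymm) (hneg : (-M).PosDef) (d : Fin r → ℝ) :
    (∃! b : Fin r → ℝ, M.mulVec b = d) ∧
      ((∀ i, d i < 0) → (∀ i j, i ≠ j → 0 ≤ M i j) →
        ∀ b : Fin r → ℝ, M.mulVec b = d → ∀ i, 0 ≤ b i) := by
  have hU : IsUnit M := by
    have := hneg.isUnit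
    simpa using this.neg
  constructor
  · have hinj : Function.Injective M.mulVec :=
      Matrix.mulVec_injective_iff_isUnit.2 hU
    refine ⟨M⁻¹ *ᵥ d, ?_, fun y hy => hinj ?_⟩
    · show M *ᵥ (M⁻¹ *ᵥ d) = d
      rw [Matrix.mulVec_mulVec, Matrix.mul_nonsing_inv _ (Matrix.isUnit_iff_isUnit_det _ |>.1 hU),
        Matrix.one_mulVec]
    · rw [hy, Matrix.mulVec_mulVec, Matrix.mul_nonsing_inv _ (Matrix.isUnit_iff_isUnit_det _ |>.1 hU),
        Matrix.one_mulVec]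
  · intro hd hoff b hb i
    -- decompose b into positive and negative parts
    set n : Fin r → ℝ := fun i => max (-b i) 0 with hn
    set p : Fin r → ℝ := fun i => max (b i) 0 with hp
    have hbpn : b = p - n := by
      funext j
      simp only [hp, hn, Pi.sub_apply]
      rcases le_total (b j) 0 with h | h
      · rw [max_eq_right h, max_eq_left (by linarith)]; ring
      · rw [max_eq_left h, max_eq_right (by linarith)]; ring
    by_contra hbi
    push_neg at hbi
    have hn0 : n ≠ 0 := by
      intro h
      have := congrFun h i
      simp only [hn, Pi.zero_apply] at this
      have : -b i ≤ 0 := by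
        rcases le_total (-b i) 0 with h' | h'
        · exact h'
        · rw [max_eq_left h'] at this; linarith
      linarith
    -- key quadratic form inequality
    have hpos : 0 < dotProduct n ((-M) *ᵥ n) := by
      have := hneg.dotProduct_mulVec_pos hn0
      simpa using this
    have hMnn : dotProduct n (M *ᵥ n) < 0 := by
      rw [Matrix.neg_mulVec, dotProduct_neg] at hpos
      linarith
    have hMnp : 0 ≤ dotProduct n (M *ᵥ p) := by
      simp only [dotProduct, Matrix.mulVec]
      apply Finset.sum_nonneg
      intro k _
      rw [Finset.mul_sum]
      apply Finset.sum_nonneg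
      intro j _
      rcases eq_or_ne k j with rfl | hkj
      · rcases le_total (b k) 0 with h | h
        · have : p k = 0 := by simp [hp, h]
          simp [this]
        · have : n k = 0 := by simp [hn, h]
          simp [this]
      · have h1 : 0 ≤ n k := le_max_right _ _
        have h2 : 0 ≤ p j := le_max_right _ _
        have h3 := hoff k j hkj
        positivity
    have hnd : dotProduct n d ≤ 0 := by
      apply Finset.sum_nonpos
      intro j _
      have : 0 ≤ n j := le_max_right _ _
      have := hd j
      nlinarith [le_max_right (-b j) (0:ℝ)]
    have hkey : dotProduct n d = dotProduct n (M *ᵥ p) - dotProduct n (M *ᵥ n) := by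
      rw [← hb, hbpn, Matrix.mulVec_sub, dotProduct_sub]
    linarith
end
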